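/- Let n = 2m−1 be odd and let {a_k}_{k=0}^{n−1}, {b_k}_{k=0}^{n−1} be real sequences with a_k > 0 for all k and a_k = a_{n−k}, b_k = b_{n−k} for 1 ≤ k ≤ n−1. Define p_0 = 1, p_1(x) = a_0 x + b_0, and p_{k+1}(x) + p_{k−1}(x) = (a_k x + b_k) p_k(x) for 1 ≤ k ≤ n−1. Assume the zeros of p_m and p_{m−1} are all real, simple, and strictly interlacing. Then there exist real numbers x_0 > x_1 > ... > x_n such that p_{n−k}(x_j) = (−1)^j p_k(x_j) for all 0 ≤ j, k ≤ n. -/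

import Mathlib

/-!
Let `w₀ > w₁ > ⋯ > w_{n-1}` be the zeros `u₁ > v₁ > u₂ > ⋯ > v_{m-1} > u_m` of `p_m p_{m-1}`.
Evaluated at a point `t`, both `k ↦ p_{n-k}(t)` and `k ↦ p_k(t)` solve the three-term recurrence,
since its coefficients are symmetric; so if `p_{m-1}(t) = ε p_m(t)` with `ε = ±1`, the solution
`k ↦ p_{n-k}(t) - ε p_k(t)` vanishes at `k = m - 1` and `k = m`, hence everywhere. The node `x_j`
is therefore taken to be a zero of `(-1)^j p_m - p_{m-1}`. As the signs of `p_{m-1}` at the `u`'s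
and of `p_m` at the `v`'s alternate, this polynomial changes sign on `[w_j, w_{j-1}]`, on
`[w₀, ∞)` for `j = 0` and on `(-∞, w_{n-1}]` for `j = n`.
-/

open Polynomial Finset Filter

section Recurrence

variable {R : Type*}

theorem eq_zero_of_recurrence_of_consecutive_zeros [Ring R] {d c : ℕ → R} {N j : ℕ}
    (hrec : ∀ k, 1 ≤ k → k < N → d (k + 1) + d (k - 1) = c k * d k)
    (hj : j < N) (h₀ : d j = 0) (h₁ : d (j + 1) = 0) : ∀ k ≤ N, d k = 0 := by
  have up : ∀ k, j + 1 ≤ k → k ≤ N → d (k - 1) = 0 ∧ d k = 0 := by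
    intro k hk
    induction k, hk using Nat.le_induction with
    | base => exact fun _ => ⟨h₀, h₁⟩
    | succ k hk ih =>
      intro hkN
      obtain ⟨hl, hr⟩ := ih (by omega)
      have := hrec k (by omega) (by omega)
      rw [hl, hr, mul_zero, add_zero] at this
      exact ⟨hr, this⟩
  have down : ∀ k ≤ j, d k = 0 ∧ d (k + 1) = 0 := by
    intro k hk
    induction hk using Nat.decreasingInduction with
    | self => exact ⟨h₀, h₁⟩
    | of_succ k hk ih =>
      have := hrec (k + 1) (by omega) (by omega)
      rw [ih.1, ih.2, mul_zero, zero_add, Nat.add_sub_cancel] at this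
      exact ⟨this, ih.1⟩
  intro k hk
  rcases le_or_gt k j with hkj | hjk
  · exact (down k hkj).1
  · exact (up k hjk hk).2

theorem eq_mul_of_recurrence_of_symmetric [CommRing R] {q c : ℕ → R} {m n : ℕ}
    (hn : n + 1 = 2 * m) (hrec : ∀ k, 1 ≤ k → k < n → q (k + 1) + q (k - 1) = c k * q k)
    (hc : ∀ k, 1 ≤ k → k < n → c k = c (n - k)) {ε : R} (hε : ε * ε = 1)
    (h : q (m - 1) = ε * q m) : ∀ k ≤ n, q (n - k) = ε * q k := by
  set d : ℕ → R := fun k => q (n - k) - ε * q k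
  have hd : ∀ k, 1 ≤ k → k < n → d (k + 1) + d (k - 1) = c k * d k := by
    intro k hk₁ hk₂
    have hr := hrec (n - k) (by omega) (by omega)
    rw [← hc k hk₁ hk₂] at hr
    simp only [d, Nat.sub_add_eq, show n - (k - 1) = n - k + 1 by omega]
    linear_combination hr - ε * hrec k hk₁ hk₂
  have hm₀ : d (m - 1) = 0 := by
    simp only [d, show n - (m - 1) = m by omega, h, ← mul_assoc, hε, one_mul, sub_self]
  have hm₁ : d (m - 1 + 1) = 0 := by
    simp only [d, Nat.sub_add_cancel (show 1 ≤ m by omega), show n - m = m - 1 by omega, h,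
      sub_self]
  intro k hk
  exact sub_eq_zero.mp (eq_zero_of_recurrence_of_consecutive_zeros hd (by omega) hm₀ hm₁ k hk)

end Recurrence

namespace Polynomial

theorem exists_isRoot_mem_Ioo {P : ℝ[X]} {a b : ℝ} (hab : a < b)
    (h : P.eval a * P.eval b < 0) : ∃ x ∈ Set.Ioo a b, P.IsRoot x := by
  have hcont : ContinuousOn (fun x => P.eval x) (Set.Icc a b) := P.continuousOn
  rcases mul_neg_iff.mp h with ⟨ha, hb⟩ | ⟨ha, hb⟩
  · exact intermediate_value_Ioo' hab.le hcont ⟨hb, ha⟩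
  · exact intermediate_value_Ioo hab.le hcont ⟨ha, hb⟩

theorem exists_isRoot_gt {P : ℝ[X]} (hP : 0 < P.degree) {a : ℝ}
    (ha : P.leadingCoeff * P.eval a < 0) : ∃ x, a < x ∧ P.IsRoot x := by
  have hlc : P.leadingCoeff ≠ 0 := leadingCoeff_ne_zero.mpr (ne_zero_of_degree_gt hP)
  have hlim : Tendsto (fun x => (C P.leadingCoeff * P).eval x) atTop atTop :=
    tendsto_atTop_of_leadingCoeff_nonneg _ (by rwa [degree_C_mul hlc])
      (by simpa using mul_self_nonneg P.leadingCoeff)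
  obtain ⟨b, hb, hab⟩ := ((hlim.eventually_gt_atTop 0).and (eventually_gt_atTop a)).exists
  rw [eval_C_mul] at hb
  have hsign : P.eval a * P.eval b < 0 := by
    refine neg_of_mul_neg_right (a := P.leadingCoeff * P.leadingCoeff) ?_ (mul_self_nonneg _)
    linear_combination mul_neg_of_neg_of_pos ha hb
  obtain ⟨x, hx, hroot⟩ := exists_isRoot_mem_Ioo hab hsign
  exact ⟨x, hx.1, hroot⟩

theorem exists_isRoot_lt {P : ℝ[X]} (hP : 0 < P.degree) {a : ℝ}
    (ha : (-1) ^ P.natDegree * P.leadingCoeff * P.eval a < 0) : ∃ x, x < a ∧ P.IsRoot x := by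
  obtain ⟨x, hx, hroot⟩ :=
    exists_isRoot_gt (P := P.comp (-X)) (by simpa using hP) (a := -a) (by simpa using ha)
  exact ⟨-x, by linarith, by simpa using hroot⟩

end Polynomial

theorem neg_one_pow_mul_prod_sub_pos (r : ℕ → ℝ) {t : ℝ} {i M : ℕ} (hiM : i ≤ M)
    (hlt : ∀ l < i, t < r l) (hgt : ∀ l, i ≤ l → l < M → r l < t) :
    0 < (-1) ^ i * ∏ l ∈ range M, (t - r l) := by
  have hneg : (-1) ^ i * ∏ l ∈ range i, (t - r l) = ∏ l ∈ range i, (r l - t) := by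
    rw [← card_range i, ← prod_const, card_range, ← prod_mul_distrib]
    exact prod_congr rfl fun l _ => by ring
  rw [← prod_range_mul_prod_Ico _ hiM, ← mul_assoc, hneg]
  refine mul_pos (prod_pos fun l hl => sub_pos.mpr (hlt l (mem_range.mp hl))) ?_
  exact prod_pos fun l hl => sub_pos.mpr (hgt l (mem_Ico.mp hl).1 (mem_Ico.mp hl).2)

theorem mul_pos_of_neg_one_pow_mul_pos {x y : ℝ} (i : ℕ) (hx : 0 < (-1) ^ i * x)
    (hy : 0 < (-1) ^ i * y) : 0 < x * y := by
  have := mul_pos hx hy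
  rwa [mul_mul_mul_comm, ← mul_pow, neg_one_mul, neg_neg, one_pow, one_mul] at this

def interleave {α : Type*} (u v : ℕ → α) (l : ℕ) : α :=
  if Even l then u (l / 2) else v (l / 2)

@[simp]
theorem interleave_two_mul {α : Type*} (u v : ℕ → α) (i : ℕ) :
    interleave u v (2 * i) = u i := by
  simp [interleave]

@[simp]
theorem interleave_two_mul_add_one {α : Type*} (u v : ℕ → α) (i : ℕ) :
    interleave u v (2 * i + 1) = v i := by
  simp [interleave, Nat.add_div_of_dvd_right]

theorem strictAntiOn_interleave {u v : ℕ → ℝ} {m : ℕ}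
    (h : ∀ i < m, v i < u i ∧ u (i + 1) < v i) :
    StrictAntiOn (interleave u v) (Set.Iic (2 * m)) := by
  refine strictAntiOn_Iic_of_succ_lt fun l hl => ?_
  rw [Order.succ_eq_add_one]
  obtain ⟨i, rfl | rfl⟩ := Nat.even_or_odd' l
  · simpa using (h i (by omega)).1
  · simpa [show 2 * i + 1 + 1 = 2 * (i + 1) by ring] using (h i (by omega)).2

noncomputable def nodePoly (P Q : ℝ[X]) (j : ℕ) : ℝ[X] := C ((-1) ^ j) * P - Q

theorem isRoot_nodePoly_iff {P Q : ℝ[X]} {j : ℕ} {x : ℝ} :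
    (nodePoly P Q j).IsRoot x ↔ Q.eval x = (-1) ^ j * P.eval x := by
  rw [nodePoly, IsRoot.def, eval_sub, eval_mul, eval_C, sub_eq_zero, eq_comm]

section Interlacing

variable {m : ℕ} {w : ℕ → ℝ}

theorem neg_one_pow_mul_prod_even_sub_odd_pos (hw : StrictAntiOn w (Set.Iic (2 * m))) {i : ℕ}
    (hi : i ≤ m) : 0 < (-1) ^ i * ∏ k ∈ range m, (w (2 * i) - w (2 * k + 1)) :=
  neg_one_pow_mul_prod_sub_pos (fun k => w (2 * k + 1)) hi
    (fun l hl => hw (show 2 * l + 1 ≤ 2 * m by omega) (show 2 * i ≤ 2 * m by omega) (by omega))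
    (fun l hl hlm => hw (show 2 * i ≤ 2 * m by omega) (show 2 * l + 1 ≤ 2 * m by omega)
      (by omega))

theorem neg_one_pow_succ_mul_prod_odd_sub_even_pos (hw : StrictAntiOn w (Set.Iic (2 * m))) {i : ℕ}
    (hi : i < m) : 0 < (-1) ^ (i + 1) * ∏ k ∈ range (m + 1), (w (2 * i + 1) - w (2 * k)) :=
  neg_one_pow_mul_prod_sub_pos (fun k => w (2 * k)) (by omega)
    (fun l hl => hw (show 2 * l ≤ 2 * m by omega) (show 2 * i + 1 ≤ 2 * m by omega) (by omega))
    (fun l hl hlm => hw (show 2 * i + 1 ≤ 2 * m by omega) (show 2 * l ≤ 2 * m by omega)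
      (by omega))

variable {cp cq : ℝ} {P Q : ℝ[X]}
  (hP : P = C cp * ∏ i ∈ range (m + 1), (X - C (w (2 * i))))
include hP

theorem natDegree_C_neg_one_pow_mul (hcp : cp ≠ 0) (j : ℕ) :
    (C ((-1) ^ j) * P).natDegree = m + 1 := by
  rw [hP, ← mul_assoc, ← C_mul, natDegree_C_mul (mul_ne_zero (pow_ne_zero _ (by norm_num)) hcp),
    natDegree_finsetProd_X_sub_C_eq_card, card_range]

variable (hQ : Q = C cq * ∏ i ∈ range m, (X - C (w (2 * i + 1))))
include hQ

theorem natDegree_lt_natDegree_C_neg_one_pow_mul (hcp : cp ≠ 0) (j : ℕ) :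
    Q.natDegree < (C ((-1) ^ j) * P).natDegree := by
  rw [natDegree_C_neg_one_pow_mul hP hcp, hQ]
  exact (natDegree_C_mul_le _ _).trans_lt (by simp)

theorem natDegree_nodePoly (hcp : cp ≠ 0) (j : ℕ) : (nodePoly P Q j).natDegree = m + 1 := by
  rw [nodePoly, natDegree_sub_eq_left_of_natDegree_lt
    (natDegree_lt_natDegree_C_neg_one_pow_mul hP hQ hcp j), natDegree_C_neg_one_pow_mul hP hcp]

theorem leadingCoeff_nodePoly (hcp : cp ≠ 0) (j : ℕ) :
    (nodePoly P Q j).leadingCoeff = (-1) ^ j * cp := by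
  rw [nodePoly, leadingCoeff_sub_of_degree_lt
    (degree_lt_degree (natDegree_lt_natDegree_C_neg_one_pow_mul hP hQ hcp j)), hP, ← mul_assoc,
    ← C_mul, (monic_prod_of_monic _ _ fun i _ => monic_X_sub_C _).leadingCoeff_C_mul]

theorem eval_nodePoly_at_even (j : ℕ) {i : ℕ} (hi : i ≤ m) :
    (nodePoly P Q j).eval (w (2 * i)) =
      -(cq * ∏ k ∈ range m, (w (2 * i) - w (2 * k + 1))) := by
  have hroot : ∏ k ∈ range (m + 1), (w (2 * i) - w (2 * k)) = 0 :=
    prod_eq_zero (mem_range.mpr (Nat.lt_succ_of_le hi)) (sub_self _)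
  simp [nodePoly, hP, hQ, eval_prod, hroot]

theorem eval_nodePoly_at_odd (j : ℕ) {i : ℕ} (hi : i < m) :
    (nodePoly P Q j).eval (w (2 * i + 1)) =
      (-1) ^ j * (cp * ∏ k ∈ range (m + 1), (w (2 * i + 1) - w (2 * k))) := by
  have hroot : ∏ k ∈ range m, (w (2 * i + 1) - w (2 * k + 1)) = 0 :=
    prod_eq_zero (mem_range.mpr hi) (sub_self _)
  simp [nodePoly, hP, hQ, eval_prod, hroot]

theorem eval_nodePoly_mul_eval_nodePoly_neg (hw : StrictAntiOn w (Set.Iic (2 * m)))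
    (hcp : 0 < cp) (hcq : 0 < cq) {j : ℕ} (hj₀ : 0 < j) (hj : j ≤ 2 * m) :
    (nodePoly P Q j).eval (w j) * (nodePoly P Q j).eval (w (j - 1)) < 0 := by
  obtain ⟨i, rfl | rfl⟩ := Nat.even_or_odd' j
  · obtain ⟨i, rfl⟩ : ∃ i', i = i' + 1 := ⟨i - 1, by omega⟩
    have hQi := neg_one_pow_mul_prod_even_sub_odd_pos hw (i := i + 1) (by omega)
    have hPi := neg_one_pow_succ_mul_prod_odd_sub_even_pos hw (i := i) (by omega)
    rw [show 2 * (i + 1) - 1 = 2 * i + 1 by omega, eval_nodePoly_at_even hP hQ _ (by omega),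
      eval_nodePoly_at_odd hP hQ _ (by omega),
      (Even.neg_one_pow ⟨i + 1, by ring⟩ : (-1 : ℝ) ^ (2 * (i + 1)) = 1)]
    nlinarith [mul_pos (mul_pos hcp hcq) (mul_pos_of_neg_one_pow_mul_pos _ hQi hPi)]
  · have hQi := neg_one_pow_mul_prod_even_sub_odd_pos hw (i := i) (by omega)
    have hPi := neg_one_pow_succ_mul_prod_odd_sub_even_pos hw (i := i) (by omega)
    have hPi' : 0 < (-1) ^ i * -∏ k ∈ range (m + 1), (w (2 * i + 1) - w (2 * k)) := by
      rw [pow_succ] at hPi; linarith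
    rw [show 2 * i + 1 - 1 = 2 * i by omega, eval_nodePoly_at_even hP hQ _ (by omega),
      eval_nodePoly_at_odd hP hQ _ (by omega),
      (Odd.neg_one_pow ⟨i, rfl⟩ : (-1 : ℝ) ^ (2 * i + 1) = -1)]
    nlinarith [mul_pos (mul_pos hcp hcq) (mul_pos_of_neg_one_pow_mul_pos _ hQi hPi')]

theorem exists_isRoot_nodePoly (hw : StrictAntiOn w (Set.Iic (2 * m)))
    (hcp : 0 < cp) (hcq : 0 < cq) {j : ℕ} (hj : j ≤ 2 * m + 1) :
    ∃ x, (j ≤ 2 * m → w j < x) ∧ (0 < j → x < w (j - 1)) ∧ (nodePoly P Q j).IsRoot x := by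
  have hdeg := natDegree_nodePoly hP hQ hcp.ne' j
  have hlc := leadingCoeff_nodePoly hP hQ hcp.ne' j
  have hpos : 0 < (nodePoly P Q j).degree := natDegree_pos_iff_degree_pos.mp (by omega)
  rcases (show j = 0 ∨ j = 2 * m + 1 ∨ (0 < j ∧ j ≤ 2 * m) by omega)
    with rfl | rfl | ⟨hj₀, hjn⟩
  · have hQ₀ := neg_one_pow_mul_prod_even_sub_odd_pos hw (Nat.zero_le m)
    have hF₀ := eval_nodePoly_at_even hP hQ 0 (Nat.zero_le m)
    simp only [mul_zero, pow_zero, one_mul] at hQ₀ hF₀ hlc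
    obtain ⟨x, hx, hroot⟩ := Polynomial.exists_isRoot_gt hpos (a := w 0) (by
      rw [hlc, hF₀]; nlinarith [mul_pos hcp (mul_pos hcq hQ₀)])
    exact ⟨x, fun _ => hx, by omega, hroot⟩
  · have hQm := neg_one_pow_mul_prod_even_sub_odd_pos hw (le_refl m)
    have hFm := eval_nodePoly_at_even hP hQ (2 * m + 1) (le_refl m)
    obtain ⟨x, hx, hroot⟩ := Polynomial.exists_isRoot_lt hpos (a := w (2 * m)) (by
      rw [hdeg, hlc, hFm, (Odd.neg_one_pow ⟨m, rfl⟩ : (-1 : ℝ) ^ (2 * m + 1) = -1), pow_succ]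
      nlinarith [mul_pos hcp (mul_pos hcq hQm)])
    exact ⟨x, by omega, fun _ => hx, hroot⟩
  · obtain ⟨x, hx, hroot⟩ := Polynomial.exists_isRoot_mem_Ioo
      (hw (show j - 1 ≤ 2 * m by omega) (show j ≤ 2 * m by omega) (by omega))
      (eval_nodePoly_mul_eval_nodePoly_neg hP hQ hw hcp hcq hj₀ hjn)
    exact ⟨x, fun _ => hx.1, fun _ => hx.2, hroot⟩

theorem exists_strictAnti_nodes (hw : StrictAntiOn w (Set.Iic (2 * m)))
    (hcp : 0 < cp) (hcq : 0 < cq) :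
    ∃ x : ℕ → ℝ, (∀ j < 2 * m + 1, x (j + 1) < x j) ∧
      ∀ j ≤ 2 * m + 1, Q.eval (x j) = (-1) ^ j * P.eval (x j) := by
  choose! x hx_gt hx_lt hx_root using fun j (hj : j ≤ 2 * m + 1) =>
    exists_isRoot_nodePoly hP hQ hw hcp hcq hj
  refine ⟨x, fun j hj => ?_, fun j hj => isRoot_nodePoly_iff.mp (hx_root j hj)⟩
  calc x (j + 1) < w j := by simpa using hx_lt (j + 1) (by omega) (by omega)
    _ < x j := hx_gt j hj.le (by omega)

end Interlacing

theorem exists_nodes_odd_general (n m : ℕ) (hm : 1 ≤ m) (hn : n = 2*m - 1)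
    (a b : ℕ → ℝ) (p : ℕ → Polynomial ℝ)
    (hrec : ∀ k, 1 ≤ k → k ≤ n - 1 →
      p (k+1) + p (k-1) = (C (a k) * X + C (b k)) * p k)
    (hrefl : ∀ k, 1 ≤ k → k ≤ n - 1 → a k = a (n - k) ∧ b k = b (n - k))
    -- the zeros of p m and p (m-1) are real and simple, with interlacing
    (u v : ℕ → ℝ) (cp cq : ℝ) (hcp : 0 < cp) (hcq : 0 < cq)
    (hpm : p m = C cp * ∏ i ∈ Finset.range m, (X - C (u (i+1))))
    (hpm1 : p (m-1) = C cq * ∏ i ∈ Finset.range (m-1), (X - C (v (i+1))))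
    (hint : ∀ i, 1 ≤ i → i ≤ m - 1 → u i > v i ∧ v i > u (i+1)) :
    ∃ x : ℕ → ℝ, (∀ j, j < n → x (j+1) < x j) ∧
      ∀ j k, j ≤ n → k ≤ n →
        (p (n - k)).eval (x j) = (-1)^j * (p k).eval (x j) := by
  obtain ⟨m, rfl⟩ : ∃ m', m = m' + 1 := ⟨m - 1, by omega⟩
  obtain rfl : n = 2 * m + 1 := by omega
  set w := interleave (fun i => u (i + 1)) (fun i => v (i + 1))
  have hw : StrictAntiOn w (Set.Iic (2 * m)) :=
    strictAntiOn_interleave fun i hi => hint (i + 1) (by omega) (by omega)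
  have hP : p (m + 1) = C cp * ∏ i ∈ range (m + 1), (X - C (w (2 * i))) := by
    simpa [w] using hpm
  have hQ : p m = C cq * ∏ i ∈ range m, (X - C (w (2 * i + 1))) := by simpa [w] using hpm1
  obtain ⟨x, hx_anti, hx_node⟩ := exists_strictAnti_nodes hP hQ hw hcp hcq
  refine ⟨x, hx_anti, fun j k hj hk => ?_⟩
  refine eq_mul_of_recurrence_of_symmetric (q := fun k => (p k).eval (x j))
    (c := fun k => a k * x j + b k) (m := m + 1) (by ring) (fun k hk₁ hk₂ => ?_)
    (fun k hk₁ hk₂ => ?_) (by rw [← mul_pow]; norm_num) (hx_node j hj) k hk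
  · simpa using congrArg (eval (x j)) (hrec k hk₁ (by omega))
  · simp only [(hrefl k hk₁ (by omega)).1, (hrefl k hk₁ (by omega)).2]

theorem exists_nodes_odd (n m : ℕ) (hm : 1 ≤ m) (hn : n = 2*m - 1)
    (a b : ℕ → ℝ) (p : ℕ → Polynomial ℝ)
    (hp0 : p 0 = 1)
    (hp1 : p 1 = C (a 0) * X + C (b 0))
    (hrec : ∀ k, 1 ≤ k → k ≤ n - 1 →
      p (k+1) + p (k-1) = (C (a k) * X + C (b k)) * p k)
    (hpos : ∀ k, k ≤ n - 1 → 0 < a k)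
    (hrefl : ∀ k, 1 ≤ k → k ≤ n - 1 → a k = a (n - k) ∧ b k = b (n - k))
    -- the zeros of p m and p (m-1) are real and simple, with interlacing
    (u v : ℕ → ℝ) (cp cq : ℝ) (hcp : 0 < cp) (hcq : 0 < cq)
    (hpm : p m = C cp * ∏ i ∈ Finset.range m, (X - C (u (i+1))))
    (hpm1 : p (m-1) = C cq * ∏ i ∈ Finset.range (m-1), (X - C (v (i+1))))
    (hint : ∀ i, 1 ≤ i → i ≤ m - 1 → u i > v i ∧ v i > u (i+1)) :
    ∃ x : ℕ → ℝ, (∀ j, j < n → x (j+1) < x j) ∧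
      ∀ j k, j ≤ n → k ≤ n →
        (p (n - k)).eval (x j) = (-1)^j * (p k).eval (x j) :=
  exists_nodes_odd_general n m hm hn a b p hrec hrefl u v cp cq hcp hcq hpm hpm1 hint
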